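/- arXiv:1012.1501 — 5 statements merged into one kernel-verified Lean document; each statement's English description precedes it below -/
import Mathlib

section
/- If F is submodular with F(∅)=F(V)=0, then for every w ∈ ℝ^p, f(w) = max_{s ∈ B(F)} ⟨w, s⟩, where B(F) = {s ∈ ℝ^p : ∀A ⊆ V, s(A) ≤ F(A), s(V) = F(V)} is the base polyhedron; in particular f is convex. -/
open MeasureTheory Finset

/-- Submodularity of a set function on the power set of `Fin p`. -/
def Submodular {p : ℕ} (F : Finset (Fin p) → ℝ) : Prop :=
  ∀ A B : Finset (Fin p), F (A ∪ B) + F (A ∩ B) ≤ F A + F B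

/-- The Lovász extension `f(w) = ∫_ℝ F({i : w i ≥ α}) dα`. -/
noncomputable def lovasz {p : ℕ} (F : Finset (Fin p) → ℝ) (w : Fin p → ℝ) : ℝ :=
  ∫ α : ℝ, F (Finset.univ.filter (fun i => α ≤ w i))

/-- The base polyhedron `B(F)`. -/
def basePolyhedron {p : ℕ} (F : Finset (Fin p) → ℝ) : Set (Fin p → ℝ) :=
  {s | (∀ A : Finset (Fin p), ∑ k ∈ A, s k ≤ F A) ∧ ∑ k, s k = F Finset.univ}

/-!
Order `V` by decreasing `w`, ties broken by index, and let `s` be the greedy vector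
`s i = F (P i ∪ {i}) - F (P i)`, where `P i` is the set of predecessors of `i`. Submodularity puts
`s` in `B(F)`, and `s(D) = F(D)` on every initial segment `D`, in particular on every superlevel
set `{w ≥ α}`. For `t` with `t(V) = 0` the layer-cake formula reads `∫ t({w ≥ α}) dα = ⟨w, t⟩`;
hence `f(w) = ⟨w, s⟩`, and `⟨w, t⟩ ≤ f(w)` for `t ∈ B(F)` by integrating
`t({w ≥ α}) ≤ F({w ≥ α}) = s({w ≥ α})`. Convexity follows since `f` is a maximum of linear
functions.
-/

open Function

lemma indicator_Iic_sub_indicator_Iic (a b α : ℝ) :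
    (Set.Iic a).indicator (1 : ℝ → ℝ) α - (Set.Iic b).indicator 1 α
      = (Set.Ioc b a).indicator 1 α - (Set.Ioc a b).indicator 1 α := by
  simp only [Set.indicator_apply, Set.mem_Iic, Set.mem_Ioc, Pi.one_apply]
  split_ifs <;> grind

lemma integrable_indicator_Ioc_one (a b : ℝ) : Integrable ((Set.Ioc a b).indicator (1 : ℝ → ℝ)) :=
  (integrable_indicator_iff measurableSet_Ioc).mpr
    ((integrableOn_const_iff (C := (1 : ℝ))).mpr (Or.inr measure_Ioc_lt_top))

lemma integrable_indicator_Iic_sub_indicator_Iic (a b : ℝ) :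
    Integrable fun α => (Set.Iic a).indicator (1 : ℝ → ℝ) α - (Set.Iic b).indicator 1 α := by
  simp_rw [indicator_Iic_sub_indicator_Iic]
  exact (integrable_indicator_Ioc_one b a).sub (integrable_indicator_Ioc_one a b)

lemma integral_indicator_Iic_sub_indicator_Iic (a b : ℝ) :
    ∫ α, (Set.Iic a).indicator (1 : ℝ → ℝ) α - (Set.Iic b).indicator 1 α = a - b := by
  simp_rw [indicator_Iic_sub_indicator_Iic]
  rw [integral_sub (integrable_indicator_Ioc_one b a) (integrable_indicator_Ioc_one a b),
    integral_indicator_one measurableSet_Ioc, integral_indicator_one measurableSet_Ioc,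
    Real.volume_real_Ioc, Real.volume_real_Ioc]
  rcases le_total a b with h | h <;> simp [h]

noncomputable def superlevelSet {ι : Type*} [Fintype ι] (w : ι → ℝ) (α : ℝ) : Finset ι :=
  univ.filter (α ≤ w ·)

section LayerCake

variable {ι : Type*} [Fintype ι] {w s : ι → ℝ}

/-- Since `∑ i, s i = 0`, subtracting `[α ≤ 0]` from each `[α ≤ w i]` changes nothing, but makes
every summand integrable. -/
lemma sum_superlevelSet_eq_sum_mul_indicator (hs : ∑ i, s i = 0) (α : ℝ) :
    ∑ i ∈ superlevelSet w α, s i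
      = ∑ i, s i * ((Set.Iic (w i)).indicator 1 α - (Set.Iic 0).indicator 1 α) := by
  simp_rw [mul_sub, sum_sub_distrib, ← sum_mul, hs, zero_mul, sub_zero]
  simp [superlevelSet, sum_filter, Set.indicator_apply]

lemma integrable_sum_superlevelSet (hs : ∑ i, s i = 0) :
    Integrable fun α => ∑ i ∈ superlevelSet w α, s i := by
  simp_rw [sum_superlevelSet_eq_sum_mul_indicator hs]
  exact integrable_finsetSum _ fun i _ =>
    (integrable_indicator_Iic_sub_indicator_Iic (w i) 0).const_mul (s i)

lemma integral_sum_superlevelSet (hs : ∑ i, s i = 0) :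
    ∫ α, ∑ i ∈ superlevelSet w α, s i = ∑ i, w i * s i := by
  simp_rw [sum_superlevelSet_eq_sum_mul_indicator hs]
  rw [integral_finsetSum _ fun i _ =>
    (integrable_indicator_Iic_sub_indicator_Iic (w i) 0).const_mul (s i)]
  refine sum_congr rfl fun i _ => ?_
  rw [integral_const_mul, integral_indicator_Iic_sub_indicator_Iic, sub_zero, mul_comm]

end LayerCake

section Greedy

variable {p : ℕ} {K : Type*} [LinearOrder K] {e : Fin p → K}

def predecessors (e : Fin p → K) (i : Fin p) : Finset (Fin p) :=
  univ.filter (e · < e i)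

def greedyBase (F : Finset (Fin p) → ℝ) (e : Fin p → K) (i : Fin p) : ℝ :=
  F (insert i (predecessors e i)) - F (predecessors e i)

lemma notMem_predecessors_self (i : Fin p) : i ∉ predecessors e i := by
  simp [predecessors]

lemma mem_predecessors_iff_ne (he : Injective e) {A : Finset (Fin p)} {i j : Fin p}
    (hmax : ∀ k ∈ A, e k ≤ e i) (hj : j ∈ A) : j ∈ predecessors e i ↔ j ≠ i := by
  simp only [predecessors, mem_filter, mem_univ, true_and]
  exact ⟨fun h hji => h.ne (congrArg e hji), fun hji => (hmax j hj).lt_of_ne (he.ne hji)⟩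

lemma subset_insert_predecessors (he : Injective e) {A : Finset (Fin p)} {i : Fin p}
    (hmax : ∀ k ∈ A, e k ≤ e i) : A ⊆ insert i (predecessors e i) := fun j hj => by
  rw [mem_insert, mem_predecessors_iff_ne he hmax hj]
  exact em _

variable {F : Finset (Fin p) → ℝ}

lemma sum_greedyBase_of_lowerClosed (h0 : F ∅ = 0) (he : Injective e) (D : Finset (Fin p))
    (hD : ∀ i ∈ D, ∀ j, e j < e i → j ∈ D) : ∑ i ∈ D, greedyBase F e i = F D := by
  induction D using Finset.strongInduction with
  | H D ih =>
    rcases D.eq_empty_or_nonempty with rfl | hne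
    · simp [h0]
    obtain ⟨i, hi, hmax⟩ := D.exists_max_image e hne
    have hD_eq : D = insert i (predecessors e i) :=
      (subset_insert_predecessors he hmax).antisymm <|
        insert_subset hi fun j hj => hD i hi j (mem_filter.1 hj).2
    have hpred : ∑ j ∈ predecessors e i, greedyBase F e j = F (predecessors e i) :=
      ih _ (hD_eq ▸ ssubset_insert (notMem_predecessors_self i)) fun j hj k hkj => by
        simp only [predecessors, mem_filter, mem_univ, true_and] at hj ⊢
        exact hkj.trans hj
    rw [hD_eq, sum_insert (notMem_predecessors_self i), hpred, greedyBase]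
    ring

lemma sum_greedyBase_le (hsub : Submodular F) (h0 : F ∅ = 0) (he : Injective e)
    (A : Finset (Fin p)) : ∑ i ∈ A, greedyBase F e i ≤ F A := by
  induction A using Finset.strongInduction with
  | H A ih =>
    rcases A.eq_empty_or_nonempty with rfl | hne
    · simp [h0]
    obtain ⟨i, hi, hmax⟩ := A.exists_max_image e hne
    have hunion : A ∪ predecessors e i = insert i (predecessors e i) :=
      (union_subset (subset_insert_predecessors he hmax) (subset_insert _ _)).antisymm <|
        insert_subset (mem_union_left _ hi) subset_union_right
    have hinter : A ∩ predecessors e i = A.erase i := by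
      ext j
      rw [mem_inter, mem_erase]
      exact ⟨fun ⟨hj, hji⟩ => ⟨(mem_predecessors_iff_ne he hmax hj).1 hji, hj⟩,
        fun ⟨hji, hj⟩ => ⟨hj, (mem_predecessors_iff_ne he hmax hj).2 hji⟩⟩
    have hsubA := hsub A (predecessors e i)
    rw [hunion, hinter] at hsubA
    have hA := ih (A.erase i) (erase_ssubset hi)
    rw [← add_sum_erase A _ hi, greedyBase]
    linarith

lemma greedyBase_mem_basePolyhedron (hsub : Submodular F) (h0 : F ∅ = 0) (he : Injective e) :
    greedyBase F e ∈ basePolyhedron F :=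
  ⟨sum_greedyBase_le hsub h0 he,
    sum_greedyBase_of_lowerClosed h0 he univ fun _ _ j _ => mem_univ j⟩

end Greedy

lemma convexOn_of_isGreatest_dotProduct {ι : Type*} [Fintype ι] {S : Set (ι → ℝ)}
    {f : (ι → ℝ) → ℝ} (hf : ∀ w, IsGreatest {x | ∃ s ∈ S, x = w ⬝ᵥ s} (f w)) :
    ConvexOn ℝ Set.univ f := by
  refine ⟨convex_univ, fun u _ v _ a b ha hb _ => ?_⟩
  obtain ⟨s, hs, hval⟩ := (hf (a • u + b • v)).1
  calc f (a • u + b • v) = a * (u ⬝ᵥ s) + b * (v ⬝ᵥ s) := by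
        rw [hval, add_dotProduct, smul_dotProduct, smul_dotProduct, smul_eq_mul, smul_eq_mul]
    _ ≤ a * f u + b * f v := by
        gcongr
        exacts [(hf u).2 ⟨s, hs, rfl⟩, (hf v).2 ⟨s, hs, rfl⟩]

lemma isGreatest_lovasz {p : ℕ} {F : Finset (Fin p) → ℝ} (hsub : Submodular F) (h0 : F ∅ = 0)
    (hV : F univ = 0) (w : Fin p → ℝ) :
    IsGreatest {x : ℝ | ∃ s ∈ basePolyhedron F, x = ∑ i, w i * s i} (lovasz F w) := by
  set e : Fin p → Lex (ℝ × Fin p) := fun i => toLex (-w i, i)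
  have he : Injective e := fun i j hij => (Prod.ext_iff.1 (toLex.injective hij)).2
  have hlevel (α : ℝ) : ∀ i ∈ superlevelSet w α, ∀ j, e j < e i → j ∈ superlevelSet w α := by
    intro i hi j hji
    simp only [superlevelSet, mem_filter, mem_univ, true_and] at hi ⊢
    exact hi.trans (neg_le_neg_iff.1 (Prod.Lex.toLex_le_toLex'.1 hji.le).1)
  have htight (α : ℝ) : ∑ i ∈ superlevelSet w α, greedyBase F e i = F (superlevelSet w α) :=
    sum_greedyBase_of_lowerClosed h0 he _ (hlevel α)
  have hbase := greedyBase_mem_basePolyhedron hsub h0 he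
  have hsum_zero {s : Fin p → ℝ} (hs : s ∈ basePolyhedron F) : ∑ i, s i = 0 := hs.2.trans hV
  have hval : lovasz F w = ∑ i, w i * greedyBase F e i := by
    rw [← integral_sum_superlevelSet (hsum_zero hbase)]
    simp_rw [htight]
    rfl
  refine ⟨⟨_, hbase, hval⟩, ?_⟩
  rintro _ ⟨s, hs, rfl⟩
  rw [hval, ← integral_sum_superlevelSet (hsum_zero hs),
    ← integral_sum_superlevelSet (hsum_zero hbase)]
  exact integral_mono (integrable_sum_superlevelSet (hsum_zero hs))
    (integrable_sum_superlevelSet (hsum_zero hbase)) fun α => (hs.1 _).trans_eq (htight α).symm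

theorem lovasz_eq_max_base {p : ℕ} (F : Finset (Fin p) → ℝ)
    (hsub : Submodular F) (h0 : F ∅ = 0) (hV : F Finset.univ = 0) :
    (∀ w : Fin p → ℝ,
      IsGreatest {x : ℝ | ∃ s ∈ basePolyhedron F, x = ∑ i, w i * s i} (lovasz F w)) ∧
    ConvexOn ℝ Set.univ (lovasz F) :=
  ⟨isGreatest_lovasz hsub h0 hV, convexOn_of_isGreatest_dotProduct (isGreatest_lovasz hsub h0 hV)⟩
end

section
/- Greedy algorithm: let F be submodular with F(∅)=0, let w ∈ ℝ^p with w_{j_1} ≥ ... ≥ w_{j_p} a decreasing ordering, and define s by s_{j_k} = F({j_1,...,j_k}) − F({j_1,...,j_{k−1}}). Then s ∈ B(F) and ⟨w, s⟩ = f(w). -/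
open Finset

/-- The set of the first `n` elements in the ordering `j`. -/
def greedyChain {p : ℕ} (j : Fin p ≃ Fin p) (n : ℕ) : Finset (Fin p) :=
  Finset.univ.filter fun i => (j.symm i : ℕ) < n

lemma greedyChain_mem {p : ℕ} (j : Fin p ≃ Fin p) (n : ℕ) (i : Fin p) :
    i ∈ greedyChain j n ↔ (j.symm i : ℕ) < n := by
  simp [greedyChain]

lemma greedyChain_zero {p : ℕ} (j : Fin p ≃ Fin p) : greedyChain j 0 = ∅ := by
  ext i; simp [greedyChain_mem]

lemma greedyChain_top {p : ℕ} (j : Fin p ≃ Fin p) : greedyChain j p = Finset.univ := by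
  ext i; simp [greedyChain_mem, (j.symm i).isLt]

lemma greedyChain_Iic {p : ℕ} (j : Fin p ≃ Fin p) (k : Fin p) :
    (Finset.Iic k).image j = greedyChain j ((k : ℕ) + 1) := by
  ext i
  simp only [Finset.mem_image, Finset.mem_Iic, greedyChain_mem, Nat.lt_succ_iff]
  constructor
  · rintro ⟨m, hm, rfl⟩
    rw [Equiv.symm_apply_apply]
    exact Fin.le_def.mp hm
  · intro h
    exact ⟨j.symm i, Fin.le_def.mpr h, j.apply_symm_apply i⟩

lemma greedyChain_Iio {p : ℕ} (j : Fin p ≃ Fin p) (k : Fin p) :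
    (Finset.Iio k).image j = greedyChain j (k : ℕ) := by
  ext i
  simp only [Finset.mem_image, Finset.mem_Iio, greedyChain_mem]
  constructor
  · rintro ⟨m, hm, rfl⟩
    rw [Equiv.symm_apply_apply]
    exact Fin.lt_def.mp hm
  · intro h
    exact ⟨j.symm i, Fin.lt_def.mpr h, j.apply_symm_apply i⟩

lemma greedyChain_succ {p : ℕ} (j : Fin p ≃ Fin p) (k : Fin p) :
    greedyChain j ((k : ℕ) + 1) = insert (j k) (greedyChain j (k : ℕ)) := by
  ext i
  simp only [greedyChain_mem, Finset.mem_insert, Nat.lt_succ_iff_lt_or_eq]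
  constructor
  · rintro (h | h)
    · exact Or.inr h
    · exact Or.inl ((Equiv.symm_apply_eq j).mp (Fin.ext h))
  · rintro (rfl | h)
    · exact Or.inr (by rw [Equiv.symm_apply_apply])
    · exact Or.inl h

/-- Greedy algorithm: given a decreasing ordering `j` of the components of `w`
(`j k` is the index of the `k`-th largest component), the vector `s` defined by
`s (j k) = F({j 0, …, j k}) - F({j 0, …, j (k-1)})` belongs to the base polyhedron
and satisfies `⟨w, s⟩ = f(w)`, where the Lovász extension is written in its
telescoped form `f(w) = Σ_{k=1}^{p-1} (w_{j_k} - w_{j_{k+1}}) F({j_1,…,j_k}) + w_{j_p} F(V)`. -/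
theorem greedy_algorithm {p : ℕ} (F : Finset (Fin p) → ℝ)
    (hsub : Submodular F) (h0 : F ∅ = 0)
    (w : Fin p → ℝ) (j : Fin p ≃ Fin p)
    (hj : ∀ k l : Fin p, k ≤ l → w (j l) ≤ w (j k))
    (s : Fin p → ℝ)
    (hs : ∀ k : Fin p,
      s (j k) = F ((Finset.Iic k).image j) - F ((Finset.Iio k).image j)) :
    s ∈ basePolyhedron F ∧
    ∑ i, w i * s i =
      ∑ k : Fin p,
        (w (j k) - if h : (k : ℕ) + 1 < p then w (j ⟨(k : ℕ) + 1, h⟩) else 0) *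
          F ((Finset.Iic k).image j) := by
  classical
  set E : ℕ → Finset (Fin p) := greedyChain j with hE
  have hE0 : E 0 = ∅ := greedyChain_zero j
  have hEp : E p = Finset.univ := greedyChain_top j
  have hIic : ∀ k : Fin p, (Finset.Iic k).image j = E ((k : ℕ) + 1) := fun k => greedyChain_Iic j k
  have hIio : ∀ k : Fin p, (Finset.Iio k).image j = E (k : ℕ) := fun k => greedyChain_Iio j k
  have hins : ∀ k : Fin p, E ((k : ℕ) + 1) = insert (j k) (E (k : ℕ)) := fun k => greedyChain_succ j k
  set a : ℕ → ℝ := fun n => F (E n) with ha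
  have hsval : ∀ k : Fin p, s (j k) = a ((k : ℕ) + 1) - a (k : ℕ) := by
    intro k; rw [hs k, hIic, hIio]
  have ha0 : a 0 = 0 := by simp [ha, hE0, h0]
  have hap : a p = F Finset.univ := by simp [ha, hEp]
  -- total sum
  have htotal : ∑ k, s k = F Finset.univ := by
    rw [← Equiv.sum_comp j s]
    calc ∑ k : Fin p, s (j k) = ∑ k : Fin p, (a ((k : ℕ) + 1) - a (k : ℕ)) :=
          Finset.sum_congr rfl fun k _ => hsval k
      _ = ∑ n ∈ Finset.range p, (a (n + 1) - a n) :=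
          Fin.sum_univ_eq_sum_range (fun n => a (n + 1) - a n) p
      _ = a p - a 0 := Finset.sum_range_sub a p
      _ = F Finset.univ := by rw [ha0, hap]; ring
  -- inequality
  have hineq : ∀ A : Finset (Fin p), ∑ i ∈ A, s i ≤ F A := by
    intro A
    set g : ℕ → ℝ := fun n => F (A ∩ E n) with hg
    have step : ∀ k : Fin p, (if j k ∈ A then s (j k) else 0) ≤ g ((k : ℕ) + 1) - g (k : ℕ) := by
      intro k
      by_cases hA : j k ∈ A
      · rw [if_pos hA, hsval k]
        have hu : (A ∩ E ((k : ℕ) + 1)) ∪ E (k : ℕ) = E ((k : ℕ) + 1) := by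
          ext i
          simp only [hins k, Finset.mem_union, Finset.mem_inter, Finset.mem_insert]
          constructor
          · rintro (⟨_, h⟩ | h) <;> tauto
          · rintro (rfl | h)
            · exact Or.inl ⟨hA, Or.inl rfl⟩
            · exact Or.inr h
        have hi : (A ∩ E ((k : ℕ) + 1)) ∩ E (k : ℕ) = A ∩ E (k : ℕ) := by
          ext i
          simp only [hins k, Finset.mem_inter, Finset.mem_insert]
          tauto
        have := hsub (A ∩ E ((k : ℕ) + 1)) (E (k : ℕ))
        rw [hu, hi] at this
        simp only [ha, hg]
        linarith
      · rw [if_neg hA]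
        have : A ∩ E ((k : ℕ) + 1) = A ∩ E (k : ℕ) := by
          ext i
          simp only [hins k, Finset.mem_inter, Finset.mem_insert]
          constructor
          · rintro ⟨h1, rfl | h2⟩
            · exact absurd h1 hA
            · exact ⟨h1, h2⟩
          · rintro ⟨h1, h2⟩; exact ⟨h1, Or.inr h2⟩
        simp [hg, this]
    calc ∑ i ∈ A, s i = ∑ i : Fin p, if i ∈ A then s i else 0 := by
          rw [Finset.sum_ite_mem, Finset.univ_inter]
      _ = ∑ k : Fin p, (if j k ∈ A then s (j k) else 0) :=
          (Equiv.sum_comp j (fun i => if i ∈ A then s i else 0)).symm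
      _ ≤ ∑ k : Fin p, (g ((k : ℕ) + 1) - g (k : ℕ)) :=
          Finset.sum_le_sum fun k _ => step k
      _ = ∑ n ∈ Finset.range p, (g (n + 1) - g n) :=
          Fin.sum_univ_eq_sum_range (fun n => g (n + 1) - g n) p
      _ = g p - g 0 := Finset.sum_range_sub g p
      _ = F A := by simp [hg, hEp, hE0, h0]
  refine ⟨⟨hineq, htotal⟩, ?_⟩
  -- inner product identity
  set b : ℕ → ℝ := fun n => if h : n < p then w (j ⟨n, h⟩) else 0 with hb
  have hbk : ∀ k : Fin p, b (k : ℕ) = w (j k) := by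
    intro k; simp [hb, k.isLt]
  have hbp : b p = 0 := by simp [hb]
  have key : ∑ n ∈ Finset.range p, b n * (a (n + 1) - a n)
      = ∑ n ∈ Finset.range p, (b n - b (n + 1)) * a (n + 1) := by
    have h1 : ∑ n ∈ Finset.range p, (b (n + 1) * a (n + 1) - b n * a n)
        = b p * a p - b 0 * a 0 := Finset.sum_range_sub (fun n => b n * a n) p
    have h2 : ∑ n ∈ Finset.range p, (b n * (a (n + 1) - a n) - (b n - b (n + 1)) * a (n + 1))
        = ∑ n ∈ Finset.range p, (b (n + 1) * a (n + 1) - b n * a n) :=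
      Finset.sum_congr rfl fun n _ => by ring
    rw [Finset.sum_sub_distrib] at h2
    rw [h1, hbp, ha0] at h2
    linarith
  calc ∑ i, w i * s i = ∑ k : Fin p, w (j k) * s (j k) :=
        (Equiv.sum_comp j (fun i => w i * s i)).symm
    _ = ∑ k : Fin p, b (k : ℕ) * (a ((k : ℕ) + 1) - a (k : ℕ)) :=
        Finset.sum_congr rfl fun k _ => by rw [hbk, hsval]
    _ = ∑ n ∈ Finset.range p, b n * (a (n + 1) - a n) :=
        Fin.sum_univ_eq_sum_range (fun n => b n * (a (n + 1) - a n)) p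
    _ = ∑ n ∈ Finset.range p, (b n - b (n + 1)) * a (n + 1) := key
    _ = ∑ k : Fin p, (b (k : ℕ) - b ((k : ℕ) + 1)) * a ((k : ℕ) + 1) :=
        (Fin.sum_univ_eq_sum_range (fun n => (b n - b (n + 1)) * a (n + 1)) p).symm
    _ = ∑ k : Fin p,
        (w (j k) - if h : (k : ℕ) + 1 < p then w (j ⟨(k : ℕ) + 1, h⟩) else 0) *
          F ((Finset.Iic k).image j) :=
        Finset.sum_congr rfl fun k _ => by rw [hbk, hIic k]
end

section
/- Soft-thresholding composition: let f be the Lovász extension of a submodular F with F(∅)=F(V)=0 and let λ > 0. If w minimizes (1/2)‖w − z‖² + f(w), then t defined by t_k = sign(w_k)·max(|w_k| − λ, 0) minimizes (1/2)‖t − z‖² + f(t) + λ‖t‖₁. -/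
open MeasureTheory Finset

/-!
If `σ` sorts `v` decreasingly, the level sets of `v` are initial segments of `σ`, so the Lovász
extension is the linear form `v ↦ ⟨g_σ, v⟩` of the greedy vector `g_σ`, which lies in the base
polytope of `F` by submodularity. Hence `f` is convex and positively homogeneous, and additive on
vectors sorted by a common `σ`. Optimality of `w` makes `s = z - w` a subgradient of `f` at `w`,
so `⟨s, ·⟩ ≤ f` with equality at `w`. Soft-thresholding and clipping are both monotone, so
`w = t + (w - t)` splits `w` into two vectors sorted like `w`, and additivity forces
`f(t) = ⟨s, t⟩`. The objective at `t` is then the separable function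
`∑ᵢ ((tᵢ - zᵢ)² / 2 + sᵢ tᵢ + λ |tᵢ|)`, which soft-thresholding minimizes coordinatewise, while at
any `u` the objective dominates the same separable function.
-/

namespace Lovasz

variable {p : ℕ}

def chain (σ : Equiv.Perm (Fin p)) (k : ℕ) : Finset (Fin p) :=
  univ.filter fun i => (σ.symm i : ℕ) < k

section Chain

variable (σ : Equiv.Perm (Fin p))

@[simp]
lemma mem_chain {k : ℕ} {i : Fin p} : i ∈ chain σ k ↔ (σ.symm i : ℕ) < k := by
  simp [chain]

@[simp]
lemma chain_zero : chain σ 0 = ∅ := by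
  ext i; simp

lemma chain_of_le {k : ℕ} (h : p ≤ k) : chain σ k = univ := by
  ext i; simpa using (σ.symm i).isLt.trans_le h

lemma chain_succ {k : ℕ} (h : k < p) : chain σ (k + 1) = insert (σ ⟨k, h⟩) (chain σ k) := by
  ext i
  rw [mem_insert, mem_chain, mem_chain, ← Equiv.symm_apply_eq, Fin.ext_iff]
  change _ < k + 1 ↔ _ = k ∨ _
  omega

lemma exists_filter_le_eq_chain {v : Fin p → ℝ} (hσ : Antitone (v ∘ σ)) (α : ℝ) :
    ∃ k ≤ p, univ.filter (fun i => α ≤ v i) = chain σ k := by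
  set L := univ.filter fun j : Fin p => α ≤ v (σ j)
  have hL : ∀ j, α ≤ v (σ j) ↔ (j : ℕ) < #L := by
    intro j
    constructor
    · intro hj
      have : Iic j ⊆ L := fun j' hj' =>
        mem_filter.2 ⟨mem_univ _, hj.trans (hσ (mem_Iic.1 hj'))⟩
      simpa using (card_le_card this)
    · intro hj
      by_contra! hlt
      have : L ⊆ Iio j := fun j' hj' => mem_Iio.2 <| lt_of_not_ge fun hle =>
        ((mem_filter.1 hj').2.trans (hσ hle)).not_gt hlt
      simpa using hj.trans_le (card_le_card this)
  refine ⟨#L, card_le_univ L |>.trans_eq (Fintype.card_fin p), ?_⟩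
  ext i
  simpa using hL (σ.symm i)

end Chain

section Greedy

variable (F : Finset (Fin p) → ℝ) (σ : Equiv.Perm (Fin p))

def greedy (i : Fin p) : ℝ :=
  F (chain σ ((σ.symm i : ℕ) + 1)) - F (chain σ (σ.symm i))

variable {F}

lemma sum_chain_greedy (hF0 : F ∅ = 0) {k : ℕ} (hk : k ≤ p) :
    ∑ i ∈ chain σ k, greedy F σ i = F (chain σ k) := by
  induction k with
  | zero => simp [hF0]
  | succ k ih =>
    have hk' : k < p := hk
    have hnot : σ ⟨k, hk'⟩ ∉ chain σ k := by simp
    rw [chain_succ σ hk', sum_insert hnot, ih hk'.le, greedy, Equiv.symm_apply_apply,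
      ← chain_succ σ hk']
    ring

lemma sum_greedy (hF0 : F ∅ = 0) (hFV : F univ = 0) : ∑ i, greedy F σ i = 0 := by
  simpa [chain_of_le σ le_rfl, hFV] using sum_chain_greedy σ hF0 le_rfl

lemma sum_filter_greedy (hF0 : F ∅ = 0) {v : Fin p → ℝ} (hσ : Antitone (v ∘ σ)) (α : ℝ) :
    ∑ i ∈ univ.filter (fun i => α ≤ v i), greedy F σ i = F (univ.filter fun i => α ≤ v i) := by
  obtain ⟨k, hk, hL⟩ := exists_filter_le_eq_chain σ hσ α
  rw [hL, sum_chain_greedy σ hF0 hk]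

lemma sum_greedy_le (hsub : Submodular F) (hF0 : F ∅ = 0) (A : Finset (Fin p)) :
    ∑ i ∈ A, greedy F σ i ≤ F A := by
  induction A using Finset.induction_on_max_value σ.symm with
  | empty => simp [hF0]
  | insert a A ha hmax ih =>
    have hA : A ⊆ chain σ (σ.symm a) := fun x hx =>
      (mem_chain σ).2 (Fin.lt_def.1 (lt_of_le_of_ne (hmax x hx)
        (fun h => ha (σ.symm.injective h ▸ hx))))
    have hunion : chain σ (σ.symm a) ∪ insert a A = chain σ ((σ.symm a : ℕ) + 1) := by
      ext x
      have := @hA x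
      grind [mem_chain, Fin.val_inj, Equiv.apply_eq_iff_eq]
    have hinter : chain σ (σ.symm a) ∩ insert a A = A := by
      ext x
      have := @hA x
      grind [mem_chain]
    have := hsub (chain σ (σ.symm a)) (insert a A)
    rw [hunion, hinter] at this
    rw [sum_insert ha, greedy]
    linarith

end Greedy

lemma indicator_Ioc_sub_indicator_Ioc (x α : ℝ) :
    (Set.Ioc 0 x).indicator 1 α - (Set.Ioc x 0).indicator 1 α =
      (if α ≤ x then 1 else 0) - (if α ≤ 0 then 1 else 0 : ℝ) := by
  simp only [Set.indicator, Set.mem_Ioc, Pi.one_apply]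
  split_ifs <;> grind

lemma integrable_indicator_Ioc_one (a b : ℝ) : Integrable ((Set.Ioc a b).indicator (1 : ℝ → ℝ)) :=
  (integrable_indicator_iff measurableSet_Ioc).2 (integrableOn_const measure_Ioc_lt_top.ne)

lemma integral_indicator_Ioc_sub (x : ℝ) :
    ∫ α, ((Set.Ioc 0 x).indicator (1 : ℝ → ℝ) α - (Set.Ioc x 0).indicator 1 α) = x := by
  rw [integral_sub (integrable_indicator_Ioc_one 0 x) (integrable_indicator_Ioc_one x 0),
    integral_indicator_one measurableSet_Ioc, integral_indicator_one measurableSet_Ioc,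
    Real.volume_real_Ioc, Real.volume_real_Ioc]
  rcases le_total 0 x with h | h <;> simp [h]

lemma exists_antitone_comp_perm (v : Fin p → ℝ) : ∃ σ : Equiv.Perm (Fin p), Antitone (v ∘ σ) :=
  ⟨Tuple.sort (-v), fun _ _ h => neg_le_neg_iff.1 (Tuple.monotone_sort (-v) h)⟩

section Modular

variable {s : Fin p → ℝ}

-- Since `∑ i, s i = 0`, the indicator of `α ≤ 0` can be subtracted from each summand, which makes
-- every summand integrable in `α`.
lemma sum_filter_le_eq (hs : ∑ i, s i = 0) (v : Fin p → ℝ) (α : ℝ) :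
    ∑ i ∈ univ.filter (fun i => α ≤ v i), s i =
      ∑ i, s i * ((Set.Ioc 0 (v i)).indicator 1 α - (Set.Ioc (v i) 0).indicator 1 α) := by
  simp_rw [indicator_Ioc_sub_indicator_Ioc, mul_sub, sum_sub_distrib, ← sum_mul, hs, zero_mul,
    sub_zero, mul_ite, mul_one, mul_zero, sum_filter]

lemma integrable_sum_filter_le (hs : ∑ i, s i = 0) (v : Fin p → ℝ) :
    Integrable fun α => ∑ i ∈ univ.filter (fun i => α ≤ v i), s i := by
  simp_rw [sum_filter_le_eq hs]
  exact integrable_finsetSum _ fun i _ =>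
    ((integrable_indicator_Ioc_one _ _).sub (integrable_indicator_Ioc_one _ _)).const_mul _

lemma lovasz_sum (hs : ∑ i, s i = 0) (v : Fin p → ℝ) :
    lovasz (fun A => ∑ i ∈ A, s i) v = ∑ i, s i * v i := by
  simp_rw [lovasz, sum_filter_le_eq hs]
  rw [integral_finsetSum _ fun i _ => ?_]
  · simp_rw [integral_const_mul, integral_indicator_Ioc_sub]
  · exact ((integrable_indicator_Ioc_one _ _).sub (integrable_indicator_Ioc_one _ _)).const_mul _

end Modular

section Extension

variable {F : Finset (Fin p) → ℝ}

lemma lovasz_eq_sum_greedy (hF0 : F ∅ = 0) (hFV : F univ = 0) {σ : Equiv.Perm (Fin p)}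
    {v : Fin p → ℝ} (hσ : Antitone (v ∘ σ)) : lovasz F v = ∑ i, greedy F σ i * v i := by
  rw [← lovasz_sum (sum_greedy σ hF0 hFV)]
  simp_rw [lovasz, sum_filter_greedy σ hF0 hσ]

lemma inner_le_lovasz (hF0 : F ∅ = 0) (hFV : F univ = 0) {s : Fin p → ℝ}
    (hsF : ∀ A, ∑ i ∈ A, s i ≤ F A) (hs : ∑ i, s i = 0) (v : Fin p → ℝ) :
    ∑ i, s i * v i ≤ lovasz F v := by
  obtain ⟨σ, hσ⟩ := exists_antitone_comp_perm v
  have hg := sum_greedy σ hF0 hFV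
  rw [lovasz_eq_sum_greedy hF0 hFV hσ, ← lovasz_sum hs, ← lovasz_sum hg]
  exact integral_mono (integrable_sum_filter_le hs v) (integrable_sum_filter_le hg v) fun α =>
    (hsF _).trans_eq (sum_filter_greedy σ hF0 hσ α).symm

lemma lovasz_add_le (hsub : Submodular F) (hF0 : F ∅ = 0) (hFV : F univ = 0) (a b : Fin p → ℝ) :
    lovasz F (a + b) ≤ lovasz F a + lovasz F b := by
  obtain ⟨σ, hσ⟩ := exists_antitone_comp_perm (a + b)
  have hle := inner_le_lovasz hF0 hFV (sum_greedy_le σ hsub hF0) (sum_greedy σ hF0 hFV)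
  rw [lovasz_eq_sum_greedy hF0 hFV hσ]
  simp only [Pi.add_apply, mul_add, sum_add_distrib]
  exact add_le_add (hle a) (hle b)

lemma lovasz_smul (hF0 : F ∅ = 0) (hFV : F univ = 0) {c : ℝ} (hc : 0 ≤ c) (v : Fin p → ℝ) :
    lovasz F (c • v) = c * lovasz F v := by
  obtain ⟨σ, hσ⟩ := exists_antitone_comp_perm v
  rw [lovasz_eq_sum_greedy hF0 hFV hσ,
    lovasz_eq_sum_greedy (v := c • v) hF0 hFV (hσ.const_smul hc), mul_sum]
  simp only [Pi.smul_apply, smul_eq_mul]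
  exact sum_congr rfl fun i _ => by ring

lemma lovasz_zero (hF0 : F ∅ = 0) (hFV : F univ = 0) : lovasz F 0 = 0 := by
  simpa using lovasz_smul hF0 hFV le_rfl (0 : Fin p → ℝ)

lemma convexOn_lovasz (hsub : Submodular F) (hF0 : F ∅ = 0) (hFV : F univ = 0) :
    ConvexOn ℝ Set.univ (lovasz F) :=
  ⟨convex_univ, fun a _ b _ μ ν hμ hν _ => by
    simpa only [lovasz_smul hF0 hFV hμ, lovasz_smul hF0 hFV hν, smul_eq_mul]
      using lovasz_add_le hsub hF0 hFV (μ • a) (ν • b)⟩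

lemma lovasz_add_of_antitone (hF0 : F ∅ = 0) (hFV : F univ = 0) {σ : Equiv.Perm (Fin p)}
    {a b : Fin p → ℝ} (ha : Antitone (a ∘ σ)) (hb : Antitone (b ∘ σ)) :
    lovasz F (a + b) = lovasz F a + lovasz F b := by
  rw [lovasz_eq_sum_greedy (v := a + b) hF0 hFV (ha.add hb), lovasz_eq_sum_greedy hF0 hFV ha,
    lovasz_eq_sum_greedy hF0 hFV hb, ← sum_add_distrib]
  simp only [Pi.add_apply, mul_add]

lemma lovasz_le_inner_of_antitone (hF0 : F ∅ = 0) (hFV : F univ = 0) {σ : Equiv.Perm (Fin p)}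
    {a b s : Fin p → ℝ} (ha : Antitone (a ∘ σ)) (hb : Antitone (b ∘ σ))
    (hs : ∀ v, ∑ i, s i * v i ≤ lovasz F v) (hab : lovasz F (a + b) ≤ ∑ i, s i * (a + b) i) :
    lovasz F a ≤ ∑ i, s i * a i := by
  rw [lovasz_add_of_antitone hF0 hFV ha hb] at hab
  simp only [Pi.add_apply, mul_add, sum_add_distrib] at hab
  linarith [hs b]

end Extension

end Lovasz

section Prox

open Filter Topology

variable {ι : Type*} [Fintype ι]

def IsSubgradient (f : (ι → ℝ) → ℝ) (s w : ι → ℝ) : Prop :=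
  ∀ u, f w + ∑ i, s i * (u i - w i) ≤ f u

lemma IsSubgradient.inner_le {f : (ι → ℝ) → ℝ} {s w : ι → ℝ} (h : IsSubgradient f s w)
    (hf : ∀ a b, f (a + b) ≤ f a + f b) (u : ι → ℝ) : ∑ i, s i * u i ≤ f u := by
  have := h (w + u)
  simp only [Pi.add_apply, add_sub_cancel_left] at this
  linarith [hf w u]

lemma IsSubgradient.apply_le_inner {f : (ι → ℝ) → ℝ} {s w : ι → ℝ} (h : IsSubgradient f s w)
    (hf : f 0 = 0) : f w ≤ ∑ i, s i * w i := by
  have := h 0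
  simp only [Pi.zero_apply, zero_sub, mul_neg, sum_neg_distrib, hf] at this
  linarith

lemma isSubgradient_sub_of_forall_prox_le {f : (ι → ℝ) → ℝ} (hf : ConvexOn ℝ Set.univ f)
    {z w : ι → ℝ} (hw : ∀ u : ι → ℝ,
      (1 / 2) * ∑ i, (w i - z i) ^ 2 + f w ≤ (1 / 2) * ∑ i, (u i - z i) ^ 2 + f u) :
    IsSubgradient f (z - w) w := by
  intro u
  simp only [Pi.sub_apply]
  set D := f u - f w - ∑ i, (z i - w i) * (u i - w i)
  set C := (1 / 2) * ∑ i, (u i - w i) ^ 2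
  have hD : ∀ ε ∈ Set.Ioc (0 : ℝ) 1, 0 ≤ D + ε * C := by
    rintro ε ⟨hε0, hε1⟩
    have hconv := hf.2 (Set.mem_univ w) (Set.mem_univ u) (sub_nonneg.2 hε1) hε0.le (by ring)
    have hmin := hw ((1 - ε) • w + ε • u)
    have hquad : ∑ i, (((1 - ε) • w + ε • u) i - z i) ^ 2 =
        ∑ i, (w i - z i) ^ 2 - 2 * ε * ∑ i, (z i - w i) * (u i - w i) +
          ε ^ 2 * ∑ i, (u i - w i) ^ 2 := by
      simp only [Pi.add_apply, Pi.smul_apply, smul_eq_mul, mul_sum, ← sum_sub_distrib,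
        ← sum_add_distrib]
      exact sum_congr rfl fun i _ => by ring
    simp only [smul_eq_mul] at hconv
    rw [hquad] at hmin
    refine (mul_nonneg_iff_of_pos_left hε0).1 ?_
    linear_combination hmin + hconv
  have hlim : Tendsto (fun ε => D + ε * C) (𝓝[>] 0) (𝓝 D) :=
    ((continuous_const.add (continuous_id.mul continuous_const)).tendsto' 0 D
      (by simp [D])).mono_left nhdsWithin_le_nhds
  have := ge_of_tendsto hlim (eventually_of_mem (Ioc_mem_nhdsGT zero_lt_one) hD)
  linarith

end Prox

section SoftThreshold

noncomputable def softThreshold (lam x : ℝ) : ℝ := Real.sign x * max (|x| - lam) 0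

variable {lam : ℝ}

lemma softThreshold_eq (hlam : 0 ≤ lam) (x : ℝ) :
    softThreshold lam x = max (x - lam) 0 + min (x + lam) 0 := by
  rcases lt_trichotomy x 0 with hx | rfl | hx
  · rw [softThreshold, Real.sign_of_neg hx, abs_of_neg hx]
    grind
  · rw [softThreshold, Real.sign_zero, zero_mul]
    grind
  · rw [softThreshold, Real.sign_of_pos hx, abs_of_pos hx]
    grind

lemma monotone_softThreshold (hlam : 0 ≤ lam) : Monotone (softThreshold lam) := fun x y h => by
  simp only [softThreshold_eq hlam]
  gcongr

lemma monotone_sub_softThreshold (hlam : 0 ≤ lam) :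
    Monotone fun x => x - softThreshold lam x := fun x y h => by
  simp only [softThreshold_eq hlam]
  grind

lemma softThreshold_le (hlam : 0 ≤ lam) (x u : ℝ) :
    (1 / 2) * (softThreshold lam x - x) ^ 2 + lam * |softThreshold lam x| ≤
      (1 / 2) * (u - x) ^ 2 + lam * |u| := by
  rw [softThreshold_eq hlam]
  rcases le_or_gt lam x with hx | hx
  · rw [max_eq_left (by linarith), min_eq_right (by linarith), add_zero,
      abs_of_nonneg (by linarith)]
    nlinarith [le_abs_self u, sq_nonneg (u - x + lam)]
  rcases le_or_gt x (-lam) with hx' | hx'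
  · rw [max_eq_right (by linarith), min_eq_left (by linarith), zero_add,
      abs_of_nonpos (by linarith)]
    nlinarith [neg_abs_le u, sq_nonneg (u - x - lam)]
  · rw [max_eq_right (by linarith), min_eq_right (by linarith), add_zero, abs_zero, mul_zero,
      add_zero]
    have hxu : x * u ≤ lam * |u| := calc
      x * u ≤ |x| * |u| := abs_mul x u ▸ le_abs_self _
      _ ≤ lam * |u| := by gcongr; exact abs_le.2 ⟨hx'.le, hx.le⟩
    nlinarith [sq_nonneg u]

end SoftThreshold

open Lovasz

/-- The proximal operator of `f + λ‖·‖₁` is obtained by soft-thresholding the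
proximal operator of `f`. -/
theorem prox_soft_threshold {p : ℕ} (F : Finset (Fin p) → ℝ)
    (hsub : Submodular F) (h0 : F ∅ = 0) (hV : F Finset.univ = 0)
    (lam : ℝ) (hlam : 0 < lam) (z w : Fin p → ℝ)
    (hw : ∀ u : Fin p → ℝ,
      (1 / 2) * ∑ i, (w i - z i) ^ 2 + lovasz F w ≤
        (1 / 2) * ∑ i, (u i - z i) ^ 2 + lovasz F u)
    (t : Fin p → ℝ)
    (ht : ∀ k, t k = Real.sign (w k) * max (|w k| - lam) 0) :
    ∀ u : Fin p → ℝ,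
      (1 / 2) * ∑ i, (t i - z i) ^ 2 + lovasz F t + lam * ∑ i, |t i| ≤
        (1 / 2) * ∑ i, (u i - z i) ^ 2 + lovasz F u + lam * ∑ i, |u i| := by
  obtain rfl : t = fun k => softThreshold lam (w k) := funext ht
  have hsubgrad := isSubgradient_sub_of_forall_prox_le (convexOn_lovasz hsub h0 hV) hw
  have hs := hsubgrad.inner_le (lovasz_add_le hsub h0 hV)
  obtain ⟨σ, hσ⟩ := exists_antitone_comp_perm w
  have hst : lovasz F (fun k => softThreshold lam (w k)) ≤
      ∑ i, (z - w) i * softThreshold lam (w i) :=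
    lovasz_le_inner_of_antitone h0 hV ((monotone_softThreshold hlam.le).comp_antitone hσ)
      (b := w - fun k => softThreshold lam (w k))
      ((monotone_sub_softThreshold hlam.le).comp_antitone hσ) hs
      (by rw [add_sub_cancel]; exact hsubgrad.apply_le_inner (lovasz_zero h0 hV))
  intro u
  have hcoord (i : Fin p) :
      (1 / 2) * (softThreshold lam (w i) - z i) ^ 2 + (z - w) i * softThreshold lam (w i) +
          lam * |softThreshold lam (w i)| ≤
        (1 / 2) * (u i - z i) ^ 2 + (z - w) i * u i + lam * |u i| := by
    rw [Pi.sub_apply]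
    linear_combination softThreshold_le hlam.le (w i) (u i)
  have hsum := sum_le_sum fun i (_ : i ∈ univ) => hcoord i
  simp only [sum_add_distrib, ← mul_sum] at hsum
  linarith [hs u]
end

section
/- For the one-dimensional total variation F on a chain graph (F(A) = Σ_{j=1}^{p−1} |1_A(j) − 1_A(j+1)|), for any disjoint B, A ⊆ V with A an interval whose neighbors' membership avoids the 'staircase' configuration (it is not the case that one end-neighbor of A is in B and the other end-neighbor is in V∖(A∪B)), one has for every nonempty C ⊊ A: F(B∪C) − F(B) − (|C|/|A|)[F(B∪A) − F(B)] ≥ min(|C|/|A|, 1 − |C|/|A|). -/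
open Finset

/-- One-dimensional total variation on the chain `V = {1,…,p}`:
`F(A) = Σ_{j=1}^{p-1} |1_A(j) - 1_A(j+1)|`. -/
noncomputable def chainTV (p : ℕ) (A : Finset ℕ) : ℝ :=
  ∑ j ∈ Finset.Ico 1 p, |(if j ∈ A then (1 : ℝ) else 0) - (if j + 1 ∈ A then (1 : ℝ) else 0)|

/-!
For `C ⊆ A = [a, b]` disjoint from `B`, the increment `F(B ∪ C) - F(B)` is the number `I` of
jumps of `1_C` inside `A`, plus `1_C(e) · (±1)` at each end `e` of `A` that has a neighbour in the
chain, with sign `-1` exactly when that neighbour lies in `B`. With `t = |C| / |A|` the quantity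
to bound is therefore `I + (c_a - t) w_L + (c_b - t) w_R`. Telescoping the jumps through a point
of `C` and through a point of `A ∖ C` gives `I ≥ 2 - c_a - c_b` and `I ≥ c_a + c_b`. Excluding
the staircase says exactly that `w_L` and `w_R` do not have opposite signs: if both are `≥ 0` the
quantity is at least `1 - t`, and if both are `≤ 0`, passing from `C` to `A ∖ C` reduces to the
first case and gives at least `t`.
-/

namespace ChainTV

noncomputable def ind (S : Finset ℕ) (j : ℕ) : ℝ := if j ∈ S then 1 else 0

theorem ind_of_mem {S : Finset ℕ} {j : ℕ} (h : j ∈ S) : ind S j = 1 := if_pos h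

theorem ind_of_notMem {S : Finset ℕ} {j : ℕ} (h : j ∉ S) : ind S j = 0 := if_neg h

theorem ind_nonneg (S : Finset ℕ) (j : ℕ) : 0 ≤ ind S j := by
  unfold ind; split_ifs <;> norm_num

theorem ind_le_one (S : Finset ℕ) (j : ℕ) : ind S j ≤ 1 := by
  unfold ind; split_ifs <;> norm_num

def variation (f : ℕ → ℝ) (m n : ℕ) : ℝ := ∑ j ∈ Ico m n, |f j - f (j + 1)|

theorem chainTV_eq_variation (p : ℕ) (S : Finset ℕ) : chainTV p S = variation (ind S) 1 p := rfl

theorem abs_sub_add_abs_sub_le_variation (f : ℕ → ℝ) {m x n : ℕ} (hmx : m ≤ x) (hxn : x ≤ n) :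
    |f m - f x| + |f x - f n| ≤ variation f m n := by
  simp only [variation, ← sum_Ico_consecutive _ hmx hxn, ← Real.dist_eq]
  exact add_le_add (dist_le_Ico_sum_dist f hmx) (dist_le_Ico_sum_dist f hxn)

theorem variation_ind_Icc (a b : ℕ) : variation (ind (Icc a b)) a b = 0 :=
  sum_eq_zero fun j hj => by
    rw [mem_Ico] at hj
    simp [ind, mem_Icc, show a ≤ j ∧ j ≤ b by omega, show a ≤ j + 1 ∧ j + 1 ≤ b by omega]

/-- The change of `|1_B n - 1_B m|` on an edge `{n, m}` when its endpoint `m ∉ B` joins `B`. -/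
noncomputable def edgeSign (B : Finset ℕ) (n : ℕ) : ℝ := if n ∈ B then -1 else 1

theorem edgeVariation_union_sub {a b : ℕ} {B C : Finset ℕ} (ha : 1 ≤ a) (hab : a ≤ b)
    (hdisj : Disjoint (Icc a b) B) (hC : C ⊆ Icc a b) (j : ℕ) :
    |ind (B ∪ C) j - ind (B ∪ C) (j + 1)| - |ind B j - ind B (j + 1)| =
      (if j ∈ Ico a b then |ind C j - ind C (j + 1)| else 0) +
      (if j = a - 1 then ind C a * edgeSign B j else 0) +
      (if j = b then ind C b * edgeSign B (b + 1) else 0) := by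
  have hin : ∀ x ∈ Icc a b, ind (B ∪ C) x = ind C x ∧ ind B x = 0 := fun x hx => by
    have := disjoint_left.mp hdisj hx
    simp [ind, this]
  have hout : ∀ x ∉ Icc a b, ind (B ∪ C) x = ind B x ∧ ind C x = 0 := fun x hx => by
    have : x ∉ C := fun h => hx (hC h)
    simp [ind, this]
  rcases lt_trichotomy (j + 1) a with h | rfl | h
  · rw [(hout j (by simp; omega)).1, (hout (j + 1) (by simp; omega)).1]
    simp only [mem_Ico]
    rw [if_neg (by omega), if_neg (by omega), if_neg (by omega)]
    ring
  · rw [(hout j (by simp)).1, (hin (j + 1) (by simp; omega)).1, (hin (j + 1) (by simp; omega)).2]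
    simp only [mem_Ico]
    rw [if_neg (by omega), if_pos (by omega), if_neg (by omega)]
    simp only [ind, edgeSign]
    split_ifs <;> norm_num
  rcases lt_trichotomy j b with h' | rfl | h'
  · rw [(hin j (by simp; omega)).1, (hin (j + 1) (by simp; omega)).1,
      (hin j (by simp; omega)).2, (hin (j + 1) (by simp; omega)).2]
    simp only [mem_Ico]
    rw [if_pos (by omega), if_neg (by omega), if_neg (by omega)]
    simp
  · rw [(hin j (by simp; omega)).1, (hout (j + 1) (by simp)).1, (hin j (by simp; omega)).2]
    simp only [mem_Ico]
    rw [if_neg (by omega), if_neg (by omega), if_pos trivial]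
    simp only [ind, edgeSign]
    split_ifs <;> norm_num
  · rw [(hout j (by simp; omega)).1, (hout (j + 1) (by simp; omega)).1]
    simp only [mem_Ico]
    rw [if_neg (by omega), if_neg (by omega), if_neg (by omega)]
    ring

theorem chainTV_union_sub {p a b : ℕ} {B C : Finset ℕ} (ha : 1 ≤ a) (hab : a ≤ b) (hbp : b ≤ p)
    (hdisj : Disjoint (Icc a b) B) (hC : C ⊆ Icc a b) :
    chainTV p (B ∪ C) - chainTV p B =
      variation (ind C) a b + ind C a * (if 1 < a then edgeSign B (a - 1) else 0) +
        ind C b * (if b < p then edgeSign B (b + 1) else 0) := by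
  rw [chainTV_eq_variation, chainTV_eq_variation, variation, variation, ← sum_sub_distrib,
    sum_congr rfl fun j _ => edgeVariation_union_sub ha hab hdisj hC j, sum_add_distrib,
    sum_add_distrib, sum_ite_mem, inter_eq_right.mpr (Ico_subset_Ico ha hbp), sum_ite_eq', sum_ite_eq']
  simp only [mem_Ico, variation]
  congr 2 <;> split_ifs <;> first | rfl | omega | simp

theorem zero_le_mul_of_not_staircase {p a b : ℕ} {B : Finset ℕ}
    (hnostair :
      ¬ ((1 < a ∧ a - 1 ∈ B ∧ b < p ∧ b + 1 ∉ B) ∨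
         (1 < a ∧ a - 1 ∉ B ∧ b < p ∧ b + 1 ∈ B))) :
    0 ≤ (if 1 < a then edgeSign B (a - 1) else 0) * (if b < p then edgeSign B (b + 1) else 0) := by
  unfold edgeSign; split_ifs <;> simp_all

theorem abs_ite_edgeSign_le (P : Prop) [Decidable P] (B : Finset ℕ) (n : ℕ) :
    |if P then edgeSign B n else 0| ≤ 1 := by
  unfold edgeSign; split_ifs <;> norm_num

theorem one_sub_le_of_nonneg_weights {t I cL cR wL wR : ℝ} (ht0 : 0 ≤ t) (ht1 : t ≤ 1)
    (hcL0 : 0 ≤ cL) (hcL1 : cL ≤ 1) (hcR0 : 0 ≤ cR) (hcR1 : cR ≤ 1)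
    (hwL0 : 0 ≤ wL) (hwL1 : wL ≤ 1) (hwR0 : 0 ≤ wR) (hwR1 : wR ≤ 1)
    (hI0 : cL + cR ≤ I) (hI1 : 2 - cL - cR ≤ I) :
    1 - t ≤ I + (cL - t) * wL + (cR - t) * wR := by
  have hL : -t * (1 - cL) ≤ (cL - t) * wL := by
    nlinarith [mul_nonneg (mul_nonneg hcL0 hwL0) (sub_nonneg.mpr ht1),
      mul_nonneg (mul_nonneg (sub_nonneg.mpr hcL1) ht0) (sub_nonneg.mpr hwL1)]
  have hR : -t * (1 - cR) ≤ (cR - t) * wR := by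
    nlinarith [mul_nonneg (mul_nonneg hcR0 hwR0) (sub_nonneg.mpr ht1),
      mul_nonneg (mul_nonneg (sub_nonneg.mpr hcR1) ht0) (sub_nonneg.mpr hwR1)]
  rcases le_total (cL + cR) 1 with hs | hs <;> nlinarith

theorem min_le_of_jumps {t I cL cR wL wR : ℝ} (ht0 : 0 ≤ t) (ht1 : t ≤ 1)
    (hcL0 : 0 ≤ cL) (hcL1 : cL ≤ 1) (hcR0 : 0 ≤ cR) (hcR1 : cR ≤ 1)
    (hwL : |wL| ≤ 1) (hwR : |wR| ≤ 1) (hw : 0 ≤ wL * wR)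
    (hI0 : |cL| + |cR| ≤ I) (hI1 : |cL - 1| + |1 - cR| ≤ I) :
    min t (1 - t) ≤ I + (cL - t) * wL + (cR - t) * wR := by
  rw [abs_of_nonneg hcL0, abs_of_nonneg hcR0] at hI0
  rw [abs_of_nonpos (by linarith), abs_of_nonneg (by linarith)] at hI1
  rw [abs_le] at hwL hwR
  rcases mul_nonneg_iff.mp hw with ⟨hwL0, hwR0⟩ | ⟨hwL0, hwR0⟩
  · exact (min_le_right _ _).trans (by apply one_sub_le_of_nonneg_weights <;> linarith)
  · -- Replacing `C` by `A ∖ C` (`c ↦ 1 - c`, `t ↦ 1 - t`) and `w` by `-w` fixes the right side.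
    have h : 1 - (1 - t) ≤ I + ((1 - cL) - (1 - t)) * -wL + ((1 - cR) - (1 - t)) * -wR := by
      apply one_sub_le_of_nonneg_weights <;> linarith
    exact (min_le_left _ _).trans (by linarith)

end ChainTV

open ChainTV in
theorem chainTV_no_staircase_bound_general (p a b : ℕ)
    (ha : 1 ≤ a) (hab : a ≤ b) (hbp : b ≤ p)
    (A : Finset ℕ) (hA : A = Finset.Icc a b)
    (B : Finset ℕ) (hdisj : Disjoint A B)
    (hnostair :
      ¬ ((1 < a ∧ a - 1 ∈ B ∧ b < p ∧ b + 1 ∉ B) ∨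
         (1 < a ∧ a - 1 ∉ B ∧ b < p ∧ b + 1 ∈ B)))
    (C : Finset ℕ) (hC : C ⊂ A) (hCne : C.Nonempty) :
    min ((C.card : ℝ) / A.card) (1 - (C.card : ℝ) / A.card) ≤
      chainTV p (B ∪ C) - chainTV p B -
        ((C.card : ℝ) / A.card) * (chainTV p (B ∪ A) - chainTV p B) := by
  subst hA
  obtain ⟨x, hxC⟩ := hCne
  obtain ⟨y, hyA, hyC⟩ := exists_of_ssubset hC
  have hx := mem_Icc.mp (hC.subset hxC)
  have hy := mem_Icc.mp hyA
  have hjumps_in := abs_sub_add_abs_sub_le_variation (ind C) hx.1 hx.2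
  have hjumps_out := abs_sub_add_abs_sub_le_variation (ind C) hy.1 hy.2
  rw [ind_of_mem hxC] at hjumps_in
  rw [ind_of_notMem hyC, sub_zero, zero_sub, abs_neg] at hjumps_out
  have ht1 : (C.card : ℝ) / (Icc a b).card ≤ 1 :=
    div_le_one_of_le₀ (by exact_mod_cast card_le_card hC.subset) (by positivity)
  have key := min_le_of_jumps (by positivity) ht1 (ind_nonneg C a) (ind_le_one C a)
    (ind_nonneg C b) (ind_le_one C b) (abs_ite_edgeSign_le _ B _) (abs_ite_edgeSign_le _ B _)
    (zero_le_mul_of_not_staircase hnostair) hjumps_out hjumps_in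
  rw [chainTV_union_sub ha hab hbp hdisj hC.subset, chainTV_union_sub ha hab hbp hdisj subset_rfl,
    variation_ind_Icc, ind_of_mem (left_mem_Icc.mpr hab), ind_of_mem (right_mem_Icc.mpr hab)]
  linarith

/-- For the one-dimensional total variation, for `A = {a,…,b}` an interval avoiding
the staircase configuration with respect to `B`, and any nonempty proper `C ⊊ A`:
`F(B∪C) - F(B) - (|C|/|A|)(F(B∪A) - F(B)) ≥ min(|C|/|A|, 1 - |C|/|A|)`. -/
theorem chainTV_no_staircase_bound (p a b : ℕ)
    (ha : 1 ≤ a) (hab : a ≤ b) (hbp : b ≤ p)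
    (A : Finset ℕ) (hA : A = Finset.Icc a b)
    (B : Finset ℕ) (hB : B ⊆ Finset.Icc 1 p) (hdisj : Disjoint A B)
    (hnostair :
      ¬ ((1 < a ∧ a - 1 ∈ B ∧ b < p ∧ b + 1 ∉ B) ∨
         (1 < a ∧ a - 1 ∉ B ∧ b < p ∧ b + 1 ∈ B)))
    (C : Finset ℕ) (hC : C ⊂ A) (hCne : C.Nonempty) :
    min ((C.card : ℝ) / A.card) (1 - (C.card : ℝ) / A.card) ≤
      chainTV p (B ∪ C) - chainTV p B -
        ((C.card : ℝ) / A.card) * (chainTV p (B ∪ A) - chainTV p B) :=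
  chainTV_no_staircase_bound_general p a b ha hab hbp A hA B hdisj hnostair C hC hCne
end

section
/- For F(A) = |A|·(p − |A|) on V = {1,...,p}, for any disjoint sets B, A ⊆ V and any C ⊆ A: F(B∪C) − F(B) − (|C|/|A|)[F(B∪A) − F(B)] ≥ (|A|/2)·min(|C|/|A|, 1 − |C|/|A|). -/
open Finset

/-- For `F(A) = |A|(p - |A|)` and disjoint `B, A` with `A` nonempty, for any `C ⊆ A`:
`F(B∪C) - F(B) - (|C|/|A|)(F(B∪A) - F(B)) ≥ (|A|/2) min(|C|/|A|, 1 - |C|/|A|)`. -/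
theorem card_complement_eta_bound {p : ℕ}
    (F : Finset (Fin p) → ℝ)
    (hF : ∀ S : Finset (Fin p), F S = (S.card : ℝ) * ((p : ℝ) - S.card))
    (B A : Finset (Fin p)) (hdisj : Disjoint B A) (hAne : A.Nonempty)
    (C : Finset (Fin p)) (hC : C ⊆ A) :
    ((A.card : ℝ) / 2) * min ((C.card : ℝ) / A.card) (1 - (C.card : ℝ) / A.card) ≤
      F (B ∪ C) - F B - ((C.card : ℝ) / A.card) * (F (B ∪ A) - F B) := by
  have hBC : Disjoint B C := hdisj.mono_right hC
  have h1 : (B ∪ C).card = B.card + C.card := card_union_of_disjoint hBC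
  have h2 : (B ∪ A).card = B.card + A.card := card_union_of_disjoint hdisj
  have ha : (0:ℝ) < A.card := by exact_mod_cast card_pos.mpr hAne
  set a : ℝ := (A.card : ℝ) with ha'
  set c : ℝ := (C.card : ℝ) with hc'
  have hca : c ≤ a := by rw [ha', hc']; exact_mod_cast card_le_card hC
  have hc0 : 0 ≤ c := by positivity
  have hR : F (B ∪ C) - F B - c / a * (F (B ∪ A) - F B) = c * (a - c) := by
    rw [hF, hF, hF, h1, h2]
    push_cast
    field_simp
    ring
  have hL : a / 2 * min (c / a) (1 - c / a) = min c (a - c) / 2 := by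
    have : (1 : ℝ) - c / a = (a - c) / a := by field_simp
    rw [this, div_eq_mul_inv c a, div_eq_mul_inv (a - c) a,
      ← min_mul_of_nonneg _ _ (by positivity : (0:ℝ) ≤ a⁻¹)]
    field_simp
  rw [hR, hL]
  rcases Nat.eq_zero_or_pos C.card with h0 | h0
  · have hce : c = 0 := by rw [hc', h0]; simp
    rw [hce]
    simp [min_eq_left ha.le]
  · rcases eq_or_lt_of_le (card_le_card hC) with he | hlt
    · have hce : c = a := by rw [hc', ha', he]
      rw [hce]
      have : a - a = 0 := by ring
      rw [this, min_eq_right ha.le]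
      norm_num
    · have h1c : (1:ℝ) ≤ c := by
        rw [hc']; exact_mod_cast h0
      have h1ac : (1:ℝ) ≤ a - c := by
        have hn : C.card + 1 ≤ A.card := hlt
        have hn' := (Nat.cast_le (α := ℝ)).mpr hn
        push_cast at hn'
        rw [ha', hc']; linarith
      have hmin : min c (a - c) ≤ c * (a - c) := by
        calc min c (a - c) ≤ c := min_le_left _ _
          _ = c * 1 := (mul_one c).symm
          _ ≤ c * (a - c) := by nlinarith
      have hmin1 : (1:ℝ) ≤ min c (a - c) := le_min h1c h1ac
      linarith
end
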